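/- arXiv:2105.09415 — 4 statements merged into one kernel-verified Lean document; each statement's English description precedes it below -/
import Mathlib

section
/- Let a, b, c, τ > 0 be real numbers. Then there exists a unique real number R with −c < R < min(a, b) and R + cτ > 0 satisfying (R/(cτ) + 1) = (a − R)(b − R)/(c + R); equivalently, R solves ln(R/(cτ) + 1) = ln(a − R) + ln(b − R) − ln(c + R). -/
theorem stmt_1 (a b c τ : ℝ) (ha : 0 < a) (hb : 0 < b) (hc : 0 < c) (hτ : 0 < τ) :
    ∃! R : ℝ, (-c < R ∧ R < min a b ∧ 0 < R + c * τ) ∧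
      R / (c * τ) + 1 = (a - R) * (b - R) / (c + R) := by
  have hm : 0 < min a b := lt_min ha hb
  have hcm : -c < min a b := by linarith
  have hcτ : 0 < c * τ := mul_pos hc hτ
  set g : ℝ → ℝ := fun R => (R + c * τ) * (c + R) - c * τ * ((a - R) * (b - R)) with hg
  have hcont : ContinuousOn g (Set.Icc (-c) (min a b)) := by
    apply Continuous.continuousOn; fun_prop
  have hga : g (-c) < 0 := by
    have h1 : 0 < a + c := by linarith
    have h2 : 0 < b + c := by linarith
    simp only [hg]
    nlinarith [mul_pos hcτ (mul_pos h1 h2)]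
  have hgb : 0 < g (min a b) := by
    have hz : (a - min a b) * (b - min a b) = 0 := by
      rcases min_choice a b with h | h <;> rw [h] <;> ring
    simp only [hg, hz]
    nlinarith
  have hmem : (0:ℝ) ∈ Set.Ioo (g (-c)) (g (min a b)) := ⟨hga, hgb⟩
  obtain ⟨R, hRmem, hgR⟩ := intermediate_value_Ioo (le_of_lt hcm) hcont hmem
  obtain ⟨hR1, hR2⟩ := hRmem
  have hcR : 0 < c + R := by linarith
  have haR : 0 < a - R := by have := min_le_left a b; linarith
  have hbR : 0 < b - R := by have := min_le_right a b; linarith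
  simp only [hg] at hgR
  have hE : (R + c * τ) * (c + R) = c * τ * ((a - R) * (b - R)) := by linarith
  have hRτ : 0 < R + c * τ := by nlinarith [mul_pos hcτ (mul_pos haR hbR)]
  refine ⟨R, ⟨⟨hR1, hR2, hRτ⟩, ?_⟩, ?_⟩
  · field_simp
    linear_combination hE
  · rintro R' ⟨⟨h1, h2, h3⟩, heq⟩
    have hcR' : 0 < c + R' := by linarith
    have haR' : 0 < a - R' := by have := min_le_left a b; linarith
    have hbR' : 0 < b - R' := by have := min_le_right a b; linarith
    have hE' : (R' + c * τ) * (c + R') = c * τ * ((a - R') * (b - R')) := by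
      field_simp at heq
      linear_combination heq
    have key : (R' - R) * ((R + R' + c + c * τ) + c * τ * (a + b - R - R')) = 0 := by
      linear_combination hE' - hE
    have hfac : 0 < (R + R' + c + c * τ) + c * τ * (a + b - R - R') := by
      have hab : 0 < a + b - R - R' := by
        have := min_le_left a b; have := min_le_right a b; linarith
      have := mul_pos hcτ hab
      linarith
    rcases mul_eq_zero.mp key with h | h
    · linarith
    · linarith
end

section
/- Let a, b, c, τ > 0 and let R be the unique solution of ln(R/(cτ) + 1) = ln(a − R) + ln(b − R) − ln(c + R) with −c < R < min(a,b) and R + cτ > 0. Define F(x) = (a−x)(ln(a−x) − 1) + (b−x)(ln(b−x) − 1) + (c+x)(ln(c+x) − 1) for −c < x < min(a,b). Then F(R) ≤ F(0). -/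
private lemma key_conv (x y : ℝ) (hx : 0 < x) (hy : 0 < y) :
    x * (Real.log x - 1) + Real.log x * (y - x) ≤ y * (Real.log y - 1) := by
  have h := Real.log_le_sub_one_of_pos (div_pos hx hy)
  rw [Real.log_div hx.ne' hy.ne'] at h
  have h2 : y * (Real.log x - Real.log y) ≤ y * (x / y - 1) :=
    mul_le_mul_of_nonneg_left h hy.le
  have h3 : y * (x / y - 1) = x - y := by field_simp
  nlinarith [h2, h3]

theorem stmt_2 (a b c τ R : ℝ) (ha : 0 < a) (hb : 0 < b) (hc : 0 < c) (hτ : 0 < τ)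
    (hR1 : -c < R) (hR2 : R < min a b) (hR3 : 0 < R + c * τ)
    (hEq : Real.log (R / (c * τ) + 1)
      = Real.log (a - R) + Real.log (b - R) - Real.log (c + R))
    (F : ℝ → ℝ)
    (hF : ∀ x, F x = (a - x) * (Real.log (a - x) - 1) + (b - x) * (Real.log (b - x) - 1)
        + (c + x) * (Real.log (c + x) - 1)) :
    F R ≤ F 0 := by
  have hcτ : 0 < c * τ := mul_pos hc hτ
  have haR : 0 < a - R := sub_pos.mpr (lt_of_lt_of_le hR2 (min_le_left a b))
  have hbR : 0 < b - R := sub_pos.mpr (lt_of_lt_of_le hR2 (min_le_right a b))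
  have hcR : 0 < c + R := by linarith
  have h1 := key_conv (a - R) a haR ha
  have h2 := key_conv (b - R) b hbR hb
  have h3 := key_conv (c + R) c hcR hc
  -- sign of R * log(R/(cτ)+1)
  have hsign : 0 ≤ R * Real.log (R / (c * τ) + 1) := by
    rcases le_or_gt 0 R with h | h
    · apply mul_nonneg h
      apply Real.log_nonneg
      have : 0 ≤ R / (c * τ) := div_nonneg h hcτ.le
      linarith
    · rw [show R * Real.log (R / (c * τ) + 1) = (-R) * (-Real.log (R / (c * τ) + 1)) by ring]
      apply mul_nonneg (by linarith)
      rw [neg_nonneg]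
      refine Real.log_nonpos ?_ ?_
      · have : 0 < (R + c * τ) / (c * τ) := div_pos hR3 hcτ
        have : R / (c * τ) + 1 = (R + c * τ) / (c * τ) := by field_simp
        linarith [div_pos hR3 hcτ, this]
      · have : R / (c * τ) ≤ 0 := div_nonpos_of_nonpos_of_nonneg h.le hcτ.le
        linarith
  rw [hEq] at hsign
  rw [hF R, hF 0]
  simp only [sub_zero, add_zero]
  nlinarith [h1, h2, h3, hsign]
end

section
/- Let a, b, c : [0,T] → ℝ be a differentiable solution of the reaction ODEs a' = b' = −ab + c, c' = ab − c with positive values, and define F(t) = a(ln a − 1) + b(ln b − 1) + c(ln c − 1) evaluated at (a(t), b(t), c(t)). Then F'(t) = −(ab − c)·ln(ab/c) ≤ 0, so F is nonincreasing. -/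
theorem stmt_7 (T : ℝ) (a b c : ℝ → ℝ)
    (ha : ∀ t ∈ Set.Icc (0:ℝ) T, HasDerivAt a (-(a t * b t) + c t) t)
    (hb : ∀ t ∈ Set.Icc (0:ℝ) T, HasDerivAt b (-(a t * b t) + c t) t)
    (hc : ∀ t ∈ Set.Icc (0:ℝ) T, HasDerivAt c (a t * b t - c t) t)
    (hpos : ∀ t ∈ Set.Icc (0:ℝ) T, 0 < a t ∧ 0 < b t ∧ 0 < c t)
    (F : ℝ → ℝ)
    (hF : ∀ t, F t = a t * (Real.log (a t) - 1) + b t * (Real.log (b t) - 1)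
        + c t * (Real.log (c t) - 1)) :
    (∀ t ∈ Set.Icc (0:ℝ) T,
        HasDerivAt F (-((a t * b t - c t) * Real.log (a t * b t / c t))) t ∧
        -((a t * b t - c t) * Real.log (a t * b t / c t)) ≤ 0) ∧
      AntitoneOn F (Set.Icc (0:ℝ) T) := by
  have hmain : ∀ t ∈ Set.Icc (0:ℝ) T,
      HasDerivAt F (-((a t * b t - c t) * Real.log (a t * b t / c t))) t := by
    intro t ht
    obtain ⟨hap, hbp, hcp⟩ := hpos t ht
    have hA : HasDerivAt (fun t => a t * (Real.log (a t) - 1))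
        ((-(a t * b t) + c t) * (Real.log (a t) - 1)
          + a t * ((a t)⁻¹ * (-(a t * b t) + c t))) t := by
      exact (ha t ht).mul (((Real.hasDerivAt_log hap.ne').comp t (ha t ht)).sub_const 1)
    have hB : HasDerivAt (fun t => b t * (Real.log (b t) - 1))
        ((-(a t * b t) + c t) * (Real.log (b t) - 1)
          + b t * ((b t)⁻¹ * (-(a t * b t) + c t))) t := by
      exact (hb t ht).mul (((Real.hasDerivAt_log hbp.ne').comp t (hb t ht)).sub_const 1)
    have hC : HasDerivAt (fun t => c t * (Real.log (c t) - 1))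
        ((a t * b t - c t) * (Real.log (c t) - 1)
          + c t * ((c t)⁻¹ * (a t * b t - c t))) t := by
      exact (hc t ht).mul (((Real.hasDerivAt_log hcp.ne').comp t (hc t ht)).sub_const 1)
    have hsum := (hA.add hB).add hC
    have hF' : F = fun t => a t * (Real.log (a t) - 1) + b t * (Real.log (b t) - 1)
        + c t * (Real.log (c t) - 1) := funext hF
    rw [hF']
    refine hsum.congr_deriv ?_
    rw [Real.log_div (by positivity) hcp.ne', Real.log_mul hap.ne' hbp.ne']
    field_simp
    ring
  have hle : ∀ t ∈ Set.Icc (0:ℝ) T,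
      -((a t * b t - c t) * Real.log (a t * b t / c t)) ≤ 0 := by
    intro t ht
    obtain ⟨hap, hbp, hcp⟩ := hpos t ht
    have habp : 0 < a t * b t := mul_pos hap hbp
    have h : 0 ≤ (a t * b t - c t) * Real.log (a t * b t / c t) := by
      rw [Real.log_div habp.ne' hcp.ne']
      rcases le_total (c t) (a t * b t) with h | h
      · exact mul_nonneg (by linarith)
          (sub_nonneg.2 (Real.log_le_log hcp h))
      · have := Real.log_le_log habp h
        nlinarith
    linarith
  refine ⟨fun t ht => ⟨hmain t ht, hle t ht⟩, ?_⟩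
  refine antitoneOn_of_deriv_nonpos (convex_Icc 0 T)
    (fun t ht => ((hmain t ht).continuousAt).continuousWithinAt) ?_ ?_
  · intro t ht
    rw [interior_Icc] at ht
    exact ((hmain t (Set.mem_Icc_of_Ioo ht)).differentiableAt).differentiableWithinAt
  · intro t ht
    rw [interior_Icc] at ht
    have ht' : t ∈ Set.Icc (0:ℝ) T := Set.mem_Icc_of_Ioo ht
    rw [(hmain t ht').deriv]
    exact hle t ht'
end

section
/- Let N ≥ 1, Δt > 0, h = 1/N, and D : edges of (ℤ/Nℤ)³ → ℝ≥0. For every grid function w : (ℤ/Nℤ)³ → ℝ there exists a unique grid function v satisfying (v − w)/Δt = ∇_h·(D∇_h v) pointwise; moreover if w(p) > 0 for all p then v(p) > 0 for all p. -/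
/-- A grid point of the periodic grid `(ℤ/Nℤ)³`. -/
abbrev GridPt (N : ℕ) := Fin 3 → ZMod N

/-- Shift a grid point by `s` in direction `i`. -/
def gridShift {N : ℕ} (p : GridPt N) (i : Fin 3) (s : ZMod N) : GridPt N :=
  Function.update p i (p i + s)

/-- The variable-coefficient discrete divergence-form operator
`(∇_h·(D ∇_h u))(p) = h⁻² Σ_{q ∼ p} D(p,q) (u q − u p)`. -/
noncomputable def discDiv {N : ℕ} (h : ℝ) (D : GridPt N → GridPt N → ℝ) (u : GridPt N → ℝ)
    (p : GridPt N) : ℝ :=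
  h⁻¹ ^ 2 * ∑ i : Fin 3,
    (D p (gridShift p i 1) * (u (gridShift p i 1) - u p)
      + D p (gridShift p i (-1)) * (u (gridShift p i (-1)) - u p))

section Aux

variable {N : ℕ}

lemma discDiv_add (h : ℝ) (D : GridPt N → GridPt N → ℝ) (u v : GridPt N → ℝ) (p : GridPt N) :
    discDiv h D (u + v) p = discDiv h D u p + discDiv h D v p := by
  unfold discDiv
  rw [← mul_add, ← Finset.sum_add_distrib]
  congr 1
  refine Finset.sum_congr rfl fun i _ => ?_
  simp only [Pi.add_apply]; ring

lemma discDiv_smul (h : ℝ) (D : GridPt N → GridPt N → ℝ) (a : ℝ) (v : GridPt N → ℝ)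
    (p : GridPt N) : discDiv h D (a • v) p = a * discDiv h D v p := by
  unfold discDiv
  conv_rhs => rw [mul_left_comm, Finset.mul_sum]
  congr 1
  refine Finset.sum_congr rfl fun i _ => ?_
  simp only [Pi.smul_apply, smul_eq_mul]; ring

lemma discDiv_nonpos (h : ℝ) (D : GridPt N → GridPt N → ℝ) (hD : ∀ p q, 0 ≤ D p q)
    (v : GridPt N → ℝ) (p : GridPt N) (hp : ∀ q, v q ≤ v p) :
    discDiv h D v p ≤ 0 := by
  have h1 : (0:ℝ) ≤ h⁻¹ ^ 2 := by positivity
  have h2 : (∑ i : Fin 3,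
      (D p (gridShift p i 1) * (v (gridShift p i 1) - v p)
        + D p (gridShift p i (-1)) * (v (gridShift p i (-1)) - v p))) ≤ 0 := by
    refine Finset.sum_nonpos fun i _ => add_nonpos ?_ ?_ <;>
      exact mul_nonpos_of_nonneg_of_nonpos (hD _ _) (by linarith [hp (gridShift p i 1), hp (gridShift p i (-1))])
  unfold discDiv
  nlinarith [mul_nonneg h1 (neg_nonneg.mpr h2)]

lemma discDiv_nonneg (h : ℝ) (D : GridPt N → GridPt N → ℝ) (hD : ∀ p q, 0 ≤ D p q)
    (v : GridPt N → ℝ) (p : GridPt N) (hp : ∀ q, v p ≤ v q) :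
    0 ≤ discDiv h D v p := by
  have h1 : (0:ℝ) ≤ h⁻¹ ^ 2 := by positivity
  have h2 : (0:ℝ) ≤ ∑ i : Fin 3,
      (D p (gridShift p i 1) * (v (gridShift p i 1) - v p)
        + D p (gridShift p i (-1)) * (v (gridShift p i (-1)) - v p)) := by
    refine Finset.sum_nonneg fun i _ => add_nonneg ?_ ?_ <;>
      exact mul_nonneg (hD _ _) (by linarith [hp (gridShift p i 1), hp (gridShift p i (-1))])
  exact mul_nonneg h1 h2

end Aux

theorem stmt_14 (N : ℕ) (hN : 1 ≤ N) (Δt : ℝ) (hΔt : 0 < Δt)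
    (D : GridPt N → GridPt N → ℝ) (hD : ∀ p q, 0 ≤ D p q)
    (w : GridPt N → ℝ) :
    (∃! v : GridPt N → ℝ, ∀ p, (v p - w p) / Δt = discDiv ((1 : ℝ) / N) D v p) ∧
      ∀ v : GridPt N → ℝ, (∀ p, (v p - w p) / Δt = discDiv ((1 : ℝ) / N) D v p) →
        (∀ p, 0 < w p) → ∀ p, 0 < v p := by
  haveI : NeZero N := ⟨by omega⟩
  set h : ℝ := (1 : ℝ) / N with hh
  -- the backward Euler operator
  let T : (GridPt N → ℝ) →ₗ[ℝ] (GridPt N → ℝ) :=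
    { toFun := fun v p => v p - Δt * discDiv h D v p
      map_add' := by
        intro u v; funext p
        simp only [Pi.add_apply, discDiv_add]; ring
      map_smul' := by
        intro a v; funext p
        simp only [Pi.smul_apply, smul_eq_mul, discDiv_smul, RingHom.id_apply]; ring }
  have hT : ∀ v p, T v p = v p - Δt * discDiv h D v p := fun _ _ => rfl
  -- injectivity via maximum principle
  have hinj : Function.Injective T := by
    rw [← LinearMap.ker_eq_bot, LinearMap.ker_eq_bot']
    intro v hv
    have hv' : ∀ p, v p = Δt * discDiv h D v p := by
      intro p
      have := congrFun hv p
      rw [hT] at this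
      simpa [sub_eq_zero] using this
    obtain ⟨p₀, hp₀⟩ := Finite.exists_max v
    obtain ⟨p₁, hp₁⟩ := Finite.exists_min v
    have h0 : v p₀ ≤ 0 := by
      have := discDiv_nonpos h D hD v p₀ hp₀
      nlinarith [hv' p₀]
    have h1 : 0 ≤ v p₁ := by
      have := discDiv_nonneg h D hD v p₁ hp₁
      nlinarith [hv' p₁]
    funext p
    have := hp₀ p
    have := hp₁ p
    simp only [Pi.zero_apply]
    linarith
  have hsurj : Function.Surjective T :=
    (LinearMap.injective_iff_surjective (f := T)).mp hinj
  -- equivalence of the equation with T v = w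
  have hequiv : ∀ v : GridPt N → ℝ,
      (∀ p, (v p - w p) / Δt = discDiv h D v p) ↔ T v = w := by
    intro v
    constructor
    · intro hv
      funext p
      have := hv p
      rw [div_eq_iff hΔt.ne'] at this
      rw [hT]; linarith
    · intro hv p
      have := congrFun hv p
      rw [hT] at this
      rw [div_eq_iff hΔt.ne']
      linarith
  obtain ⟨v, hv⟩ := hsurj w
  constructor
  · exact ⟨v, (hequiv v).mpr hv, fun y hy => hinj (((hequiv y).mp hy).trans hv.symm)⟩
  · intro v hv hw
    have hveq : ∀ p, v p - w p = Δt * discDiv h D v p := by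
      intro p
      have := hv p
      rw [div_eq_iff hΔt.ne'] at this
      linarith
    obtain ⟨p₁, hp₁⟩ := Finite.exists_min v
    have hpos : 0 < v p₁ := by
      have := discDiv_nonneg h D hD v p₁ hp₁
      nlinarith [hveq p₁, hw p₁]
    intro p
    exact lt_of_lt_of_le hpos (hp₁ p)
end
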